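/- Let Γ be an infinite thick locally finitely chained generalized n-gon. Then n ∈ {3, 4, 6, 8}. -/

import Mathlib

/-- A point-line incidence geometry. -/
structure IncGeom where
  P : Type
  L : Type
  I : P → L → Prop

namespace IncGeom

variable (G : IncGeom)

/-- The bipartite incidence graph on points and lines. -/
def incGraph : SimpleGraph (G.P ⊕ G.L) where
  Adj x y :=
    (∃ p l, x = Sum.inl p ∧ y = Sum.inr l ∧ G.I p l) ∨
    (∃ p l, x = Sum.inr l ∧ y = Sum.inl p ∧ G.I p l)
  symm := by
    constructor
    rintro x y (⟨p, l, rfl, rfl, h⟩ | ⟨p, l, rfl, rfl, h⟩)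
    · exact Or.inr ⟨p, l, rfl, rfl, h⟩
    · exact Or.inl ⟨p, l, rfl, rfl, h⟩
  loopless := by
    constructor
    rintro x (⟨p, l, h1, h2, _⟩ | ⟨p, l, h1, h2, _⟩) <;> subst h1 <;> simp_all

/-- A weak generalized `n`-gon: the incidence graph has diameter `n` and girth `2n`. -/
def IsWeakGenPolygon (n : ℕ) : Prop :=
  G.incGraph.ediam = (n : ℕ∞) ∧ G.incGraph.egirth = ((2 * n : ℕ) : ℕ∞)

/-- Thick: every point is on at least 3 lines and every line carries at least 3 points. -/
def Thick : Prop :=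
  (∀ p : G.P, ∃ l₁ l₂ l₃ : G.L, l₁ ≠ l₂ ∧ l₁ ≠ l₃ ∧ l₂ ≠ l₃ ∧ G.I p l₁ ∧ G.I p l₂ ∧ G.I p l₃) ∧
  (∀ l : G.L, ∃ p₁ p₂ p₃ : G.P, p₁ ≠ p₂ ∧ p₁ ≠ p₃ ∧ p₂ ≠ p₃ ∧ G.I p₁ l ∧ G.I p₂ l ∧ G.I p₃ l)

/-- A (thick) generalized `n`-gon. -/
def IsGenPolygon (n : ℕ) : Prop := G.IsWeakGenPolygon n ∧ G.Thick

/-- The geometry has order `(u,v)`: every line has `u+1` points, every point is on `v+1` lines. -/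
def HasOrder (u v : ℕ) : Prop :=
  (∀ l : G.L, {p : G.P | G.I p l}.ncard = u + 1) ∧
  (∀ p : G.P, {l : G.L | G.I p l}.ncard = v + 1)

/-- Two points are collinear if some line is incident with both. -/
def Collin (p q : G.P) : Prop := ∃ l, G.I p l ∧ G.I q l

/-- Generalized quadrangle axioms. -/
def IsGQ : Prop :=
  (∀ p q : G.P, p ≠ q → ∀ l m : G.L, G.I p l → G.I q l → G.I p m → G.I q m → l = m) ∧
  (∀ (p : G.P) (l : G.L), ¬ G.I p l → ∃! q : G.P, G.I q l ∧ G.Collin p q)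

end IncGeom

/-- A morphism of incidence geometries. -/
structure IncMor (G G' : IncGeom) where
  fP : G.P → G'.P
  fL : G.L → G'.L
  inc : ∀ p l, G.I p l → G'.I (fP p) (fL l)

/-- An epimorphism: surjective on points and on lines. -/
def IncMor.IsEpi {G G' : IncGeom} (α : IncMor G G') : Prop :=
  Function.Surjective α.fP ∧ Function.Surjective α.fL

namespace IncGeom

/-- The restriction of a geometry to subsets of points and lines. -/
def restrict (G : IncGeom) (Ps : Set G.P) (Ls : Set G.L) : IncGeom where
  P := Ps
  L := Ls
  I := fun p l => G.I p.1 l.1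

/-- `(Ps, Ls)` carries a sub-n-gon of `G` (possibly thin). -/
def IsSubPolygon (G : IncGeom) (n : ℕ) (Ps : Set G.P) (Ls : Set G.L) : Prop :=
  (G.restrict Ps Ls).IsWeakGenPolygon n

/-- Points of the subgeometry generated by a point set S: the intersection of all
sub-n-gons containing S. -/
def genP (G : IncGeom) (n : ℕ) (S : Set G.P) : Set G.P :=
  {p | ∀ Ps Ls, G.IsSubPolygon n Ps Ls → S ⊆ Ps → p ∈ Ps}

/-- Lines of the subgeometry generated by a point set S. -/
def genL (G : IncGeom) (n : ℕ) (S : Set G.P) : Set G.L :=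
  {l | ∀ Ps Ls, G.IsSubPolygon n Ps Ls → S ⊆ Ps → l ∈ Ls}

/-- Locally finitely generated: every finite point set generating a sub-n-gon
generates a finite one. -/
def LocFinGenerated (G : IncGeom) (n : ℕ) : Prop :=
  ∀ S : Set G.P, S.Finite → G.IsSubPolygon n (G.genP n S) (G.genL n S) →
    (G.genP n S).Finite ∧ (G.genL n S).Finite

/-- Locally finitely chained: an increasing chain of finite point sets, each
generating a finite sub-n-gon, whose generated sub-n-gons exhaust G. -/
def LocFinChained (G : IncGeom) (n : ℕ) : Prop :=
  ∃ S : ℕ → Set G.P, Monotone S ∧ (∀ i, (S i).Finite) ∧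
    (∀ i, G.IsSubPolygon n (G.genP n (S i)) (G.genL n (S i)) ∧
      (G.genP n (S i)).Finite ∧ (G.genL n (S i)).Finite) ∧
    (⋃ i, G.genP n (S i)) = Set.univ ∧ (⋃ i, G.genL n (S i)) = Set.univ

end IncGeom

/-!
The stages `⟨S i⟩` exhaust `Γ`, so one finite stage `H = ⟨S j⟩` contains three neighbours
(in the incidence graph) of every element of the finite stage `K = ⟨S 0⟩`. This makes `H` thick,
and Feit–Higman applies to it. Thickness spreads from `K` to all of `H` by two facts about weak
generalized `n`-gons. First, every vertex `z` is opposite (at distance `n`) some vertex of `K`: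
starting inside `K`, walk away from `z`. Below distance `n` at most one neighbour of a vertex is
closer to `z`, since two of them would close a cycle shorter than `2n`, and every vertex of `K`
has two neighbours in `K`. Second, if `z` and `t` are opposite, then `z` has at least as many
neighbours as `t`. Applying the same argument to a `2n`-cycle gives every vertex of `K` its two
neighbours in the first place.
-/

namespace SimpleGraph

variable {V : Type*} {G : SimpleGraph V}

theorem egirth_le_length_add_length {u v : V} {p q : G.Walk u v} (hp : p.IsPath)
    (hq : q.IsPath) (hpq : p ≠ q) : G.egirth ≤ (p.length + q.length : ℕ) := by
  set H := fromEdgeSet {e | e ∈ p.edges ++ q.edges}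
  have hpH : ∀ e ∈ p.edges, e ∈ H.edgeSet := fun e he => by
    rw [edgeSet_fromEdgeSet]
    exact ⟨List.mem_append_left _ he, G.not_isDiag_of_mem_edgeSet (p.edges_subset_edgeSet he)⟩
  have hqH : ∀ e ∈ q.edges, e ∈ H.edgeSet := fun e he => by
    rw [edgeSet_fromEdgeSet]
    exact ⟨List.mem_append_right _ he, G.not_isDiag_of_mem_edgeSet (q.edges_subset_edgeSet he)⟩
  have hHG : H ≤ G := (fromEdgeSet_le G).mpr fun e he => by
    rcases List.mem_append.mp he.1 with he' | he'
    exacts [p.edges_subset_edgeSet he', q.edges_subset_edgeSet he']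
  have hH : ¬ H.IsAcyclic := by
    rw [isAcyclic_iff_subsingleton_path]
    intro h
    have := congrArg
      (fun r : H.Path u v =>
        r.1.transfer G fun e he => edgeSet_mono hHG (r.1.edges_subset_edgeSet he))
      ((h u v).elim ⟨p.transfer H hpH, hp.transfer hpH⟩ ⟨q.transfer H hqH, hq.transfer hqH⟩)
    simp only [Walk.transfer_transfer, Walk.transfer_self] at this
    exact hpq this
  -- a cycle of `H` uses each edge of `p` and `q` at most once
  obtain ⟨a, c, hc, -⟩ := exists_egirth_eq_length.mpr hH
  calc G.egirth ≤ (c.mapLe hHG).length := egirth_le_length (hc.mapLe hHG)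
    _ = c.edges.length := by simp
    _ ≤ (p.edges ++ q.edges).length := by
      refine ENat.natCast_le_natCast.mpr (hc.edges_nodup.subperm fun e he => ?_).length_le
      have := c.edges_subset_edgeSet he
      rw [edgeSet_fromEdgeSet] at this
      exact this.1
    _ = (p.length + q.length : ℕ) := by simp

theorem reachable_of_ediam_le {n : ℕ} (hd : G.ediam ≤ n) (u v : V) : G.Reachable u v :=
  preconnected_of_ediam_ne_top (ne_top_of_le_ne_top (ENat.natCast_ne_top n) hd) u v

theorem dist_le_of_ediam_le {n : ℕ} (hd : G.ediam ≤ n) (u v : V) : G.dist u v ≤ n :=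
  ENat.toNat_le_of_le_natCast (edist_le_ediam.trans hd)

theorem Coloring.dist_ne_of_adj (c : G.Coloring Bool) {u v w : V} (hr : G.Reachable u v)
    (h : G.Adj v w) : G.dist u v ≠ G.dist u w := by
  obtain ⟨p, hp⟩ := hr.exists_walk_length_eq_dist
  obtain ⟨q, hq⟩ := (hr.trans h.reachable).exists_walk_length_eq_dist
  intro heq
  have hp' := c.even_length_iff_congr p
  have hq' := c.even_length_iff_congr q
  rw [hp, heq, ← hq, hq'] at hp'
  have := c.valid h
  cases hu : c u <;> cases hv : c v <;> cases hw : c w <;> simp_all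

theorem Coloring.dist_eq_add_one_or (c : G.Coloring Bool) {u v w : V} (hr : G.Reachable u v)
    (h : G.Adj v w) : G.dist u w = G.dist u v + 1 ∨ G.dist u v = G.dist u w + 1 := by
  have := c.dist_ne_of_adj hr h
  rcases h.diff_dist_adj (u := u) with h' | h' | h' <;> omega

theorem le_dist_of_ne_of_dist_add_one_eq {n : ℕ} (hg : ((2 * n : ℕ) : ℕ∞) ≤ G.egirth)
    {z c x₁ x₂ : V}
    (h₁ : G.Adj x₁ c) (h₂ : G.Adj x₂ c) (hne : x₁ ≠ x₂)
    (hd₁ : G.dist z x₁ + 1 = G.dist z c) (hd₂ : G.dist z x₂ + 1 = G.dist z c) :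
    n ≤ G.dist z c := by
  classical
  have hzc : G.Reachable z c := Reachable.of_dist_ne_zero (by omega)
  have geodesic : ∀ {x} (h : G.Adj x c), G.dist z x + 1 = G.dist z c →
      ∃ g : G.Walk z x, (g.concat h).IsPath ∧ (g.concat h).length = G.dist z c := by
    intro x h hd
    obtain ⟨g, hg, hlen⟩ := (hzc.trans h.symm.reachable).exists_path_of_dist
    refine ⟨g, hg.concat (fun hc => ?_) h, by simp [hlen, hd]⟩
    have := (G.dist_le (g.takeUntil c hc)).trans (g.length_takeUntil_le_length hc)
    omega
  obtain ⟨g₁, hp₁, hl₁⟩ := geodesic h₁ hd₁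
  obtain ⟨g₂, hp₂, hl₂⟩ := geodesic h₂ hd₂
  have hcyc := hg.trans (egirth_le_length_add_length hp₁ hp₂ fun h => hne (Walk.concat_inj h).1)
  rw [hl₁, hl₂] at hcyc
  have : 2 * n ≤ G.dist z c + G.dist z c := by exact_mod_cast hcyc
  omega

theorem exists_mem_dist_eq {n : ℕ} (c : G.Coloring Bool) (hd : G.ediam ≤ n)
    (hg : ((2 * n : ℕ) : ℕ∞) ≤ G.egirth) {W : Set V}
    (hW : ∀ x ∈ W, 2 ≤ (G.neighborSet x ∩ W).encard) {x : V} (hx : x ∈ W) (z : V) :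
    ∃ y ∈ W, G.dist z y = n := by
  induction hk : n - G.dist z x generalizing x with
  | zero => exact ⟨x, hx, le_antisymm (dist_le_of_ediam_le hd z x) (by omega)⟩
  | succ k ih =>
    obtain ⟨y₁, y₂, ⟨h₁, hy₁⟩, ⟨h₂, hy₂⟩, hne⟩ :=
      Set.one_lt_encard_iff.mp (lt_of_lt_of_le (by norm_num) (hW x hx))
    have hr := reachable_of_ediam_le hd z x
    rcases c.dist_eq_add_one_or hr h₁ with h₁' | h₁'
    · exact ih hy₁ (by omega)
    rcases c.dist_eq_add_one_or hr h₂ with h₂' | h₂'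
    · exact ih hy₂ (by omega)
    have := le_dist_of_ne_of_dist_add_one_eq hg h₁.symm h₂.symm hne h₁'.symm h₂'.symm
    omega

theorem encard_neighborSet_le_of_dist_eq {n : ℕ} (c : G.Coloring Bool) (hn : 2 ≤ n)
    (hd : G.ediam ≤ n) (hg : ((2 * n : ℕ) : ℕ∞) ≤ G.egirth) {z t : V}
    (hzt : G.dist z t = n) :
    (G.neighborSet t).encard ≤ (G.neighborSet z).encard := by
  have hr := reachable_of_ediam_le hd
  have hdist : ∀ s ∈ G.neighborSet t, G.dist z s + 1 = n := by
    intro s hs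
    have := dist_le_of_ediam_le hd z s
    rcases c.dist_eq_add_one_or (hr z t) hs with h | h <;> omega
  choose g hglen using fun s => (hr z s).exists_walk_length_eq_dist
  have hnil : ∀ s ∈ G.neighborSet t, ¬ (g s).Nil := fun s hs =>
    Walk.not_nil_iff_lt_length.mpr (by rw [hglen]; have := hdist s hs; omega)
  have hsnd : ∀ s ∈ G.neighborSet t,
      G.dist (g s).snd s + 1 = G.dist (g s).snd t ∧ G.dist (g s).snd t + 1 = n := by
    intro s hs
    have h₁ := G.dist_le (g s).tail
    have h₂ := (g s).length_tail_add_one (hnil s hs)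
    have h₃ := (hr z (g s).snd).dist_triangle_left t
    have h₄ := (hr (g s).snd s).dist_triangle_left t
    rw [dist_eq_one_iff_adj.mpr ((g s).adj_snd (hnil s hs))] at h₃
    rw [dist_eq_one_iff_adj.mpr (G.adj_symm hs)] at h₄
    have := hglen s
    have := hdist s hs
    omega
  -- two neighbours of `t` sharing the second vertex `b` would both be closer to `b` than `t` is
  refine Set.encard_le_encard_of_injOn (f := fun s => (g s).snd)
    (fun s hs => (g s).adj_snd (hnil s hs)) fun s hs s' hs' heq => ?_
  by_contra hne
  obtain ⟨h₁, h₁'⟩ := hsnd s hs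
  obtain ⟨h₂, -⟩ := hsnd s' hs'
  simp only at heq
  rw [← heq] at h₂
  have := le_dist_of_ne_of_dist_add_one_eq hg (G.adj_symm hs) (G.adj_symm hs') hne h₁ h₂
  omega

theorem le_encard_neighborSet_of_forall_mem {n : ℕ} (c : G.Coloring Bool) (hn : 2 ≤ n)
    (hd : G.ediam ≤ n) (hg : ((2 * n : ℕ) : ℕ∞) ≤ G.egirth) {W : Set V}
    (hW : ∀ x ∈ W, 2 ≤ (G.neighborSet x ∩ W).encard) (hW₀ : W.Nonempty) {k : ℕ∞}
    (hk : ∀ x ∈ W, k ≤ (G.neighborSet x).encard) (z : V) :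
    k ≤ (G.neighborSet z).encard := by
  obtain ⟨x, hx⟩ := hW₀
  obtain ⟨y, hy, hzy⟩ := exists_mem_dist_eq c hd hg hW hx z
  exact (hk y hy).trans (encard_neighborSet_le_of_dist_eq c hn hd hg hzy)

theorem two_le_encard_neighborSet {n : ℕ} (c : G.Coloring Bool) (hn : 2 ≤ n)
    (hd : G.ediam ≤ n) (hg : ((2 * n : ℕ) : ℕ∞) ≤ G.egirth) (hG : ¬ G.IsAcyclic)
    (v : V) :
    2 ≤ (G.neighborSet v).encard := by
  obtain ⟨a, w, hw, -⟩ := exists_egirth_eq_length.mpr hG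
  set W : Set V := {x | x ∈ w.support}
  have hW : ∀ x ∈ W, 2 ≤ (G.neighborSet x ∩ W).encard := by
    intro x hx
    have h₂ := hw.ncard_neighborSet_toSubgraph_eq_two hx
    calc (2 : ℕ∞) = (w.toSubgraph.neighborSet x).encard := by
          rw [← Set.Finite.cast_ncard_eq (Set.finite_of_ncard_ne_zero (by omega)), h₂]; rfl
      _ ≤ (G.neighborSet x ∩ W).encard := Set.encard_le_encard fun y hy =>
          ⟨w.toSubgraph.adj_sub hy, w.mem_verts_toSubgraph.mp (w.toSubgraph.edge_vert hy.symm)⟩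
  exact le_encard_neighborSet_of_forall_mem c hn hd hg hW ⟨a, w.start_mem_support⟩
    (fun x hx => (hW x hx).trans (Set.encard_le_encard Set.inter_subset_left)) v

theorem Embedding.image_neighborSet {V' : Type*} {G' : SimpleGraph V'} (f : G' ↪g G) (v : V') :
    f '' G'.neighborSet v = G.neighborSet (f v) ∩ Set.range f := by
  ext x
  constructor
  · rintro ⟨y, hy, rfl⟩
    exact ⟨f.map_adj_iff.mpr hy, y, rfl⟩
  · rintro ⟨hx, y, rfl⟩
    exact ⟨y, f.map_adj_iff.mp hx, rfl⟩

theorem Embedding.encard_neighborSet_inter_preimage {V' : Type*} {G' : SimpleGraph V'}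
    (f : G' ↪g G) (v : V') (A : Set V) :
    (G'.neighborSet v ∩ f ⁻¹' A).encard =
      (G.neighborSet (f v) ∩ Set.range f ∩ A).encard := by
  rw [← f.image_neighborSet, ← Set.image_inter_preimage, f.injective.encard_image]

theorem Embedding.encard_neighborSet {V' : Type*} {G' : SimpleGraph V'} (f : G' ↪g G) (v : V') :
    (G'.neighborSet v).encard = (G.neighborSet (f v) ∩ Set.range f).encard := by
  rw [← f.image_neighborSet, f.injective.encard_image]

end SimpleGraph

theorem Set.three_le_encard_iff {α : Type*} {s : Set α} :
    3 ≤ s.encard ↔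
      ∃ a b c, a ≠ b ∧ a ≠ c ∧ b ≠ c ∧ a ∈ s ∧ b ∈ s ∧ c ∈ s := by
  constructor
  · intro h
    obtain ⟨t, hts, ht⟩ := Set.exists_subset_encard_eq h
    obtain ⟨a, b, c, hab, hac, hbc, rfl⟩ := Set.encard_eq_three.mp ht
    exact ⟨a, b, c, hab, hac, hbc, hts (by simp), hts (by simp), hts (by simp)⟩
  · rintro ⟨a, b, c, hab, hac, hbc, ha, hb, hc⟩
    calc (3 : ℕ∞) = ({a, b, c} : Set α).encard :=
          (Set.encard_eq_three.mpr ⟨a, b, c, hab, hac, hbc, rfl⟩).symm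
      _ ≤ s.encard := Set.encard_le_encard (by simp [Set.insert_subset_iff, ha, hb, hc])

theorem Set.exists_le_encard_inter_of_monotone {α : Type*} {U : ℕ → Set α} (hU : Monotone U)
    (hcover : ⋃ i, U i = Set.univ) {s : Set α} (hs : s.Finite) {N : α → Set α} {k : ℕ}
    (hN : ∀ x ∈ s, k ≤ (N x).encard) : ∃ j, ∀ x ∈ s, k ≤ (N x ∩ U j).encard := by
  choose! t hts ht using fun x hx => Set.exists_subset_encard_eq (hN x hx)
  have hT : (⋃ x ∈ s, t x).Finite :=
    hs.biUnion fun x hx => Set.finite_of_encard_eq_coe (ht x hx)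
  obtain ⟨j, hj⟩ := hU.directed_le.exists_mem_subset_of_finset_subset_biUnion
    (s := hT.toFinset) (by simp [hcover])
  refine ⟨j, fun x hx => ?_⟩
  rw [← ht x hx]
  refine Set.encard_le_encard (Set.subset_inter (hts x hx) fun y hy => hj ?_)
  simpa using ⟨x, hx, hy⟩

namespace IncGeom

variable (G : IncGeom)

@[simp]
theorem incGraph_adj_inl_inr {p : G.P} {l : G.L} :
    G.incGraph.Adj (.inl p) (.inr l) ↔ G.I p l := by
  simp [incGraph]

@[simp]
theorem incGraph_adj_inr_inl {p : G.P} {l : G.L} :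
    G.incGraph.Adj (.inr l) (.inl p) ↔ G.I p l := by
  simp [incGraph]

@[simp]
theorem not_incGraph_adj_inl_inl {p q : G.P} : ¬ G.incGraph.Adj (.inl p) (.inl q) := by
  simp [incGraph]

@[simp]
theorem not_incGraph_adj_inr_inr {l m : G.L} : ¬ G.incGraph.Adj (.inr l) (.inr m) := by
  simp [incGraph]

def incGraphColoring : G.incGraph.Coloring Bool :=
  SimpleGraph.Coloring.mk Sum.isLeft (by rintro (p | l) (q | m) h <;> simp_all)

theorem incGraph_neighborSet_inl (p : G.P) :
    G.incGraph.neighborSet (.inl p) = Sum.inr '' {l | G.I p l} := by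
  ext (q | l) <;> simp

theorem incGraph_neighborSet_inr (l : G.L) :
    G.incGraph.neighborSet (.inr l) = Sum.inl '' {p | G.I p l} := by
  ext (p | m) <;> simp

theorem thick_iff : G.Thick ↔ ∀ v, 3 ≤ (G.incGraph.neighborSet v).encard := by
  simp only [Thick, Sum.forall, incGraph_neighborSet_inl, incGraph_neighborSet_inr]
  simp only [Sum.inl_injective.encard_image, Sum.inr_injective.encard_image,
    Set.three_le_encard_iff, Set.mem_ofPred_eq]

variable {G}

theorem IsWeakGenPolygon.two_le {n : ℕ} (h : G.IsWeakGenPolygon n) : 2 ≤ n := by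
  have := SimpleGraph.three_le_egirth (G := G.incGraph)
  rw [h.2] at this
  have : 3 ≤ 2 * n := by exact_mod_cast this
  omega

theorem IsWeakGenPolygon.not_isAcyclic {n : ℕ} (h : G.IsWeakGenPolygon n) :
    ¬ G.incGraph.IsAcyclic := by
  rw [← SimpleGraph.egirth_eq_top, h.2]
  exact ENat.natCast_ne_top _

theorem IsWeakGenPolygon.two_le_encard_neighborSet {n : ℕ} (h : G.IsWeakGenPolygon n)
    (v : G.P ⊕ G.L) : 2 ≤ (G.incGraph.neighborSet v).encard :=
  SimpleGraph.two_le_encard_neighborSet G.incGraphColoring h.two_le h.1.le h.2.ge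
    h.not_isAcyclic v

variable (G)

def restrictEmbedding (Ps : Set G.P) (Ls : Set G.L) :
    (G.restrict Ps Ls).incGraph ↪g G.incGraph where
  toFun := Sum.map (fun p => p.1) (fun l => l.1)
  inj' := Sum.map_injective.mpr ⟨Subtype.val_injective, Subtype.val_injective⟩
  map_rel_iff' := by
    rintro (p | l) (q | m)
    · exact (iff_of_false (G.not_incGraph_adj_inl_inl) (not_incGraph_adj_inl_inl _))
    · exact (G.incGraph_adj_inl_inr).trans (incGraph_adj_inl_inr (G.restrict Ps Ls)).symm
    · exact (G.incGraph_adj_inr_inl).trans (incGraph_adj_inr_inl (G.restrict Ps Ls)).symm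
    · exact (iff_of_false (G.not_incGraph_adj_inr_inr) (not_incGraph_adj_inr_inr _))

theorem mem_range_restrictEmbedding {Ps : Set G.P} {Ls : Set G.L} {x : G.P ⊕ G.L} :
    x ∈ Set.range (G.restrictEmbedding Ps Ls) ↔ x.elim (· ∈ Ps) (· ∈ Ls) := by
  constructor
  · rintro ⟨p | l, rfl⟩
    exacts [p.2, l.2]
  · rcases x with p | l <;> intro h
    exacts [⟨.inl ⟨p, h⟩, rfl⟩, ⟨.inr ⟨l, h⟩, rfl⟩]

theorem range_restrictEmbedding_mono {Ps Ps' : Set G.P} {Ls Ls' : Set G.L} (hP : Ps ⊆ Ps')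
    (hL : Ls ⊆ Ls') :
    Set.range (G.restrictEmbedding Ps Ls) ⊆ Set.range (G.restrictEmbedding Ps' Ls') := by
  rintro (p | l) <;> simp only [mem_range_restrictEmbedding, Sum.elim_inl, Sum.elim_inr]
  exacts [fun h => hP h, fun h => hL h]

theorem iUnion_range_restrictEmbedding {ι : Type*} {Ps : ι → Set G.P} {Ls : ι → Set G.L}
    (hP : ⋃ i, Ps i = Set.univ) (hL : ⋃ i, Ls i = Set.univ) :
    ⋃ i, Set.range (G.restrictEmbedding (Ps i) (Ls i)) = Set.univ := by
  refine Set.eq_univ_of_forall fun x => Set.mem_iUnion.mpr ?_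
  rcases x with p | l
  · obtain ⟨i, hi⟩ := Set.mem_iUnion.mp (hP ▸ Set.mem_univ p)
    exact ⟨i, G.mem_range_restrictEmbedding.mpr hi⟩
  · obtain ⟨i, hi⟩ := Set.mem_iUnion.mp (hL ▸ Set.mem_univ l)
    exact ⟨i, G.mem_range_restrictEmbedding.mpr hi⟩

theorem finite_range_restrictEmbedding {Ps : Set G.P} {Ls : Set G.L} (hP : Ps.Finite)
    (hL : Ls.Finite) : (Set.range (G.restrictEmbedding Ps Ls)).Finite :=
  have : Finite (G.restrict Ps Ls).P := hP.to_subtype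
  have : Finite (G.restrict Ps Ls).L := hL.to_subtype
  Set.finite_range _

theorem thick_restrict_of_isSubPolygon {n : ℕ} {Ps Ps' : Set G.P} {Ls Ls' : Set G.L}
    (hK : G.IsSubPolygon n Ps Ls) (hH : G.IsSubPolygon n Ps' Ls') (hP : Ps ⊆ Ps')
    (hL : Ls ⊆ Ls')
    (hthick : ∀ x ∈ Set.range (G.restrictEmbedding Ps Ls),
      3 ≤ (G.incGraph.neighborSet x ∩ Set.range (G.restrictEmbedding Ps' Ls')).encard) :
    (G.restrict Ps' Ls').Thick := by
  set e₀ := G.restrictEmbedding Ps Ls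
  set e := G.restrictEmbedding Ps' Ls'
  have hrange : Set.range e₀ ⊆ Set.range e := G.range_restrictEmbedding_mono hP hL
  rw [thick_iff]
  refine SimpleGraph.le_encard_neighborSet_of_forall_mem (incGraphColoring _)
    (IsWeakGenPolygon.two_le hH) hH.1.le hH.2.ge (W := e ⁻¹' Set.range e₀) ?_ ?_
    (fun x hx => e.encard_neighborSet x ▸ hthick (e x) hx)
  · rintro x ⟨y, hy⟩
    rw [e.encard_neighborSet_inter_preimage, ← hy, Set.inter_assoc,
      Set.inter_eq_right.mpr hrange, ← e₀.encard_neighborSet]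
    exact IsWeakGenPolygon.two_le_encard_neighborSet hK y
  · obtain ⟨a, -⟩ :=
      SimpleGraph.exists_egirth_eq_length.mpr (IsWeakGenPolygon.not_isAcyclic hK)
    obtain ⟨x, hx⟩ := hrange ⟨a, rfl⟩
    exact ⟨x, a, hx.symm⟩

theorem genP_mono {n : ℕ} {S T : Set G.P} (h : S ⊆ T) : G.genP n S ⊆ G.genP n T :=
  fun _ hp Ps Ls hPL hT => hp Ps Ls hPL (h.trans hT)

theorem genL_mono {n : ℕ} {S T : Set G.P} (h : S ⊆ T) : G.genL n S ⊆ G.genL n T :=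
  fun _ hl Ps Ls hPL hT => hl Ps Ls hPL (h.trans hT)

end IncGeom

theorem stmt_12_general (n : ℕ) (G : IncGeom)
    (FeitHigman : ∀ H : IncGeom, Finite H.P → Finite H.L → H.IsGenPolygon n →
      n = 3 ∨ n = 4 ∨ n = 6 ∨ n = 8)
    (hG : G.IsGenPolygon n) (hchain : G.LocFinChained n) :
    n = 3 ∨ n = 4 ∨ n = 6 ∨ n = 8 := by
  obtain ⟨S, hS, -, hstage, hPcover, hLcover⟩ := hchain
  set U : ℕ → Set (G.P ⊕ G.L) :=
    fun i => Set.range (G.restrictEmbedding (G.genP n (S i)) (G.genL n (S i)))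
  have hU : Monotone U := fun i j hij =>
    G.range_restrictEmbedding_mono (G.genP_mono (hS hij)) (G.genL_mono (hS hij))
  obtain ⟨j, hj⟩ := Set.exists_le_encard_inter_of_monotone hU
    (G.iUnion_range_restrictEmbedding hPcover hLcover)
    (G.finite_range_restrictEmbedding (hstage 0).2.1 (hstage 0).2.2)
    (fun x _ => (G.thick_iff.mp hG.2) x)
  obtain ⟨hsub, hPfin, hLfin⟩ := hstage j
  exact FeitHigman _ hPfin.to_subtype hLfin.to_subtype ⟨hsub,
    G.thick_restrict_of_isSubPolygon (hstage 0).1 hsub (G.genP_mono (hS (Nat.zero_le j)))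
      (G.genL_mono (hS (Nat.zero_le j))) hj⟩

/-- An infinite thick locally finitely chained generalized n-gon has n ∈ {3,4,6,8}
(assuming the Feit–Higman theorem). -/
theorem stmt_12 (n : ℕ) (G : IncGeom)
    (FeitHigman : ∀ H : IncGeom, Finite H.P → Finite H.L → H.IsGenPolygon n →
      n = 3 ∨ n = 4 ∨ n = 6 ∨ n = 8)
    (hinf : ¬ (Finite G.P ∧ Finite G.L))
    (hG : G.IsGenPolygon n) (hchain : G.LocFinChained n) :
    n = 3 ∨ n = 4 ∨ n = 6 ∨ n = 8 :=
  stmt_12_general n G FeitHigman hG hchain
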